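/- arXiv:2301.07902 — 9 statements merged into one kernel-verified Lean document; each statement's English description precedes it below -/
import Mathlib

section
/- Let d ≥ 1, let H be a d×d real symmetric matrix with 0 ⪯ H ⪯ βI for some β > 0, let δ ∈ (0, 1/2], and let η ∈ (0, 1/(8β)]. Then the spectral radius of the 3d×3d block matrix A = [[(1−δ)I, 0, −ηI], [I, 0, 0], [H, −H, 0]] satisfies ρ(A) < 1 − δ/2 (in particular ρ(A) < 1). -/
/-!
Let `λ ≠ 0` be an eigenvalue of `A` with eigenvector `(x, y, z)`. The second block row gives
`x = λ y`, and eliminating `y` and `z` leaves `λ² (1 - δ - λ) x = η (λ - 1) H x` with `x ≠ 0`.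
Pairing with `x` turns this into the scalar cubic `λ² (1 - δ - λ) = ε (λ - 1)`, where the
Rayleigh quotient `ε = η ⟪x, H x⟫ / ‖x‖²` lies in `[0, η β] ⊆ [0, 1/8]`. If `|λ| ≥ 1 - δ/2`,
then `t = |λ - (1 - δ)| ≥ δ/2`, so `|λ - 1| ≤ t + δ ≤ 3 t`, and taking norms in the cubic gives
`(9/16) t ≤ |λ|² t ≤ (3/8) t`, which is impossible.
-/

open Matrix

noncomputable section

/-- A `3d × 3d` matrix built from a `3 × 3` array of `d × d` blocks. -/
def blk3 {R : Type*} {d : ℕ} (B : Fin 3 → Fin 3 → Matrix (Fin d) (Fin d) R) :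
    Matrix (Fin 3 × Fin d) (Fin 3 × Fin d) R :=
  Matrix.of fun p q => B p.1 q.1 p.2 q.2

theorem Matrix.exists_mulVec_eq_smul_of_mem_spectrum {K n : Type*} [Field K] [Fintype n]
    [DecidableEq n] {M : Matrix n n K} {μ : K} (h : μ ∈ spectrum K M) :
    ∃ v ≠ 0, M *ᵥ v = μ • v := by
  rw [← spectrum_toLin', ← Module.End.hasEigenvalue_iff_mem_spectrum] at h
  obtain ⟨v, hv⟩ := h.exists_hasEigenvector
  exact ⟨v, hv.2, by simpa using hv.apply_eq_smul⟩

theorem blk3_mulVec_row {R : Type*} [NonUnitalNonAssocSemiring R] {d : ℕ}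
    (B : Fin 3 → Fin 3 → Matrix (Fin d) (Fin d) R) (v : Fin 3 × Fin d → R) (i : Fin 3) :
    (fun k => (blk3 B *ᵥ v) (i, k)) = ∑ j, B i j *ᵥ fun l => v (j, l) := by
  ext k
  simp [blk3, mulVec, dotProduct, Fintype.sum_prod_type]

theorem blk3_map {R S : Type*} {d : ℕ} (B : Fin 3 → Fin 3 → Matrix (Fin d) (Fin d) R)
    (f : R → S) : (blk3 B).map f = blk3 fun i j => (B i j).map f :=
  rfl

def dynamicsMatrix {R : Type*} [Ring R] {d : ℕ} (a b : R) (H : Matrix (Fin d) (Fin d) R) :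
    Matrix (Fin 3 × Fin d) (Fin 3 × Fin d) R :=
  blk3 ![![a • 1, 0, b • 1], ![1, 0, 0], ![H, -H, 0]]

theorem dynamicsMatrix_map {R S : Type*} [Ring R] [Ring S] {d : ℕ} (f : R →+* S) (a b : R)
    (H : Matrix (Fin d) (Fin d) R) :
    (dynamicsMatrix a b H).map f = dynamicsMatrix (f a) (f b) (H.map f) := by
  rw [dynamicsMatrix, blk3_map, dynamicsMatrix]
  congr 1
  ext i j : 2
  fin_cases i <;> fin_cases j <;> simp [smul_one_eq_diagonal, Matrix.map_neg]

theorem exists_smul_eq_smul_mulVec_of_dynamicsMatrix {K : Type*} [Field K] {d : ℕ} {a b μ : K}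
    {H : Matrix (Fin d) (Fin d) K} {v : Fin 3 × Fin d → K} (hμ : μ ≠ 0) (hb : b ≠ 0)
    (hv0 : v ≠ 0) (hv : dynamicsMatrix a b H *ᵥ v = μ • v) :
    ∃ x : Fin d → K, x ≠ 0 ∧ (μ ^ 2 * (μ - a)) • x = (b * (μ - 1)) • (H *ᵥ x) := by
  have row (i : Fin 3) : ∑ j, ![![a • 1, 0, b • 1], ![1, 0, 0], ![H, -H, 0]] i j *ᵥ
      (fun l => v (j, l)) = μ • fun l => v (i, l) := by
    rw [← blk3_mulVec_row, ← dynamicsMatrix, hv]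
    rfl
  simp only [Fin.sum_univ_three] at row
  set x : Fin d → K := fun k => v (0, k)
  set y : Fin d → K := fun k => v (1, k)
  set z : Fin d → K := fun k => v (2, k)
  have e0 : a • x + b • z = μ • x := by simpa [smul_mulVec] using row 0
  have e1 : x = μ • y := by simpa using row 1
  have e2 : H *ᵥ x - H *ᵥ y = μ • z := by simpa [neg_mulVec, sub_eq_add_neg] using row 2
  have e1' : H *ᵥ x = μ • H *ᵥ y := by rw [e1, mulVec_smul]
  refine ⟨x, fun hx => hv0 ?_, ?_⟩
  · have hy : y = 0 := by simpa [hx, hμ, eq_comm] using e1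
    have hz : z = 0 := by simpa [hx, hb] using e0
    ext ⟨i, k⟩
    fin_cases i
    · exact congrFun hx k
    · exact congrFun hy k
    · exact congrFun hz k
  · linear_combination (norm := module) -μ ^ 2 • e0 - (b * μ) • e2 + b • e1'

open scoped ComplexOrder

open scoped MatrixOrder in
theorem Matrix.PosSemidef.map_ofReal {n : Type*} [Fintype n] {H : Matrix n n ℝ}
    (hH : H.PosSemidef) : (H.map (Complex.ofReal ·)).PosSemidef := by
  classical
  obtain ⟨B, rfl⟩ := CStarAlgebra.nonneg_iff_eq_star_mul_self.mp hH.nonneg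
  change ((star B * B).map Complex.ofRealHom).PosSemidef
  rw [Matrix.map_mul, star_eq_conjTranspose,
    conjTranspose_map Complex.ofRealHom fun x => (Complex.conj_ofReal x).symm]
  exact posSemidef_conjTranspose_mul_self _

theorem exists_eq_mul_of_smul_eq_smul_mulVec {n : Type*} [Fintype n] [DecidableEq n]
    {H : Matrix n n ℝ} {β : ℝ} (hH : H.PosSemidef) (hHβ : (β • 1 - H).PosSemidef)
    {x : n → ℂ} (hx : x ≠ 0) {c e : ℂ} (h : c • x = e • (H.map (Complex.ofReal ·) *ᵥ x)) :
    ∃ r : ℝ, 0 ≤ r ∧ r ≤ β ∧ c = e * r := by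
  set q := star x ⬝ᵥ (H.map (Complex.ofReal ·) *ᵥ x)
  set N := star x ⬝ᵥ x
  have hq : 0 ≤ q := hH.map_ofReal.dotProduct_mulVec_nonneg x
  have hN : 0 < N := dotProduct_star_self_pos_iff.mpr hx
  have hqβ : q ≤ β * N := by
    have := hHβ.map_ofReal.dotProduct_mulVec_nonneg x
    have hmap : (β • 1 - H).map (Complex.ofReal ·) = (β : ℂ) • 1 - H.map (Complex.ofReal ·) := by
      simp [Matrix.map_sub, smul_one_eq_diagonal]
    rwa [hmap, sub_mulVec, smul_mulVec, one_mulVec, dotProduct_sub, dotProduct_smul,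
      sub_nonneg] at this
  have hcN : c * N = e * q := by
    simpa only [dotProduct_smul, smul_eq_mul] using congrArg (star x ⬝ᵥ ·) h
  have hq0 : 0 ≤ q.re := (Complex.le_def.mp hq).1
  have hN0 : 0 < N.re := (Complex.lt_def.mp hN).1
  have hqβ' : q.re ≤ β * N.re := by simpa using (Complex.le_def.mp hqβ).1
  refine ⟨q.re / N.re, by positivity, (div_le_iff₀ hN0).mpr hqβ', ?_⟩
  rw [Complex.eq_re_of_ofReal_le hq, Complex.eq_re_of_ofReal_le hN.le] at hcN
  have : (N.re : ℂ) ≠ 0 := by exact_mod_cast hN0.ne'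
  push_cast
  field_simp
  linear_combination hcN

theorem norm_lt_one_sub_half_of_cubic {μ : ℂ} {δ ε : ℝ} (hδ : 0 < δ) (hδ' : δ ≤ 1 / 2)
    (hε : 0 ≤ ε) (hε' : ε ≤ 1 / 8) (h : μ ^ 2 * ((1 - δ : ℝ) - μ) = ε * (μ - 1)) :
    ‖μ‖ < 1 - δ / 2 := by
  by_contra! hμ
  set t := ‖μ - (1 - δ : ℝ)‖
  have ht : δ / 2 ≤ t := by
    have := norm_sub_norm_le μ ((1 - δ : ℝ) : ℂ)
    rw [Complex.norm_real, Real.norm_of_nonneg (by linarith)] at this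
    linarith
  have hu : ‖μ - 1‖ ≤ t + δ := by
    calc ‖μ - 1‖ = ‖(μ - (1 - δ : ℝ)) - (δ : ℂ)‖ := by push_cast; ring_nf
    _ ≤ t + ‖(δ : ℂ)‖ := norm_sub_le _ _
    _ = t + δ := by rw [Complex.norm_real, Real.norm_of_nonneg hδ.le]
  have hnorm : ‖μ‖ ^ 2 * t = ε * ‖μ - 1‖ := by
    simpa only [norm_mul, norm_pow, norm_sub_rev _ μ, Complex.norm_real,
      Real.norm_of_nonneg hε] using congrArg norm h
  have hsq : 9 / 16 ≤ ‖μ‖ ^ 2 := by nlinarith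
  nlinarith [mul_le_mul_of_nonneg_right hsq (by linarith : 0 ≤ t),
    mul_le_mul hε' hu (norm_nonneg _) (by norm_num)]

theorem stmt0_general (d : ℕ) (H : Matrix (Fin d) (Fin d) ℝ) (β : ℝ) (hβ : 0 < β)
    (hH : H.PosSemidef) (hHβ : (β • (1 : Matrix (Fin d) (Fin d) ℝ) - H).PosSemidef)
    (δ η : ℝ) (hδ : δ ∈ Set.Ioc (0 : ℝ) (1 / 2)) (hη : η ∈ Set.Ioc (0 : ℝ) (1 / (8 * β)))
    (A : Matrix (Fin 3 × Fin d) (Fin 3 × Fin d) ℝ)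
    (hA : A = blk3 ![![(1 - δ) • 1, 0, (-η) • 1], ![1, 0, 0], ![H, -H, 0]]) :
    (∀ lam ∈ spectrum ℂ (A.map (Complex.ofReal ·)), ‖lam‖ < 1 - δ / 2) ∧
      (∀ lam ∈ spectrum ℂ (A.map (Complex.ofReal ·)), ‖lam‖ < 1) := by
  obtain ⟨hδ0, hδ1⟩ := hδ
  obtain ⟨hη0, hη1⟩ := hη
  have hηβ : η * β ≤ 1 / 8 := by
    have := (le_div_iff₀ (by positivity)).mp hη1
    linarith
  have hρ : ∀ μ ∈ spectrum ℂ (A.map (Complex.ofReal ·)), ‖μ‖ < 1 - δ / 2 := by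
    intro μ hμ
    rcases eq_or_ne μ 0 with rfl | hμ0
    · simpa using (by linarith : (0 : ℝ) < 1 - δ / 2)
    obtain ⟨v, hv0, hv⟩ := exists_mulVec_eq_smul_of_mem_spectrum hμ
    subst hA
    change (dynamicsMatrix (1 - δ) (-η) H).map Complex.ofRealHom *ᵥ v = μ • v at hv
    rw [dynamicsMatrix_map] at hv
    obtain ⟨x, hx0, hx⟩ :=
      exists_smul_eq_smul_mulVec_of_dynamicsMatrix hμ0 (by simpa using hη0.ne') hv0 hv
    obtain ⟨r, hr0, hrβ, hr⟩ := exists_eq_mul_of_smul_eq_smul_mulVec hH hHβ hx0 hx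
    refine norm_lt_one_sub_half_of_cubic (ε := η * r) hδ0 hδ1 (by positivity)
      ((mul_le_mul_of_nonneg_left hrβ hη0.le).trans hηβ) ?_
    simp only [Complex.ofRealHom_eq_coe] at hr
    push_cast at hr ⊢
    linear_combination -hr
  exact ⟨hρ, fun μ hμ => (hρ μ hμ).trans_le (by linarith)⟩

/-- Lemma 3.3: the meta-optimization dynamics matrix
`A = [[(1−δ)I, 0, −ηI], [I, 0, 0], [H, −H, 0]]` has spectral radius `< 1 − δ/2 < 1`
whenever `0 ⪯ H ⪯ βI`, `δ ∈ (0, 1/2]` and `0 < η ≤ 1/(8β)`. -/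
theorem stmt0 (d : ℕ) (hd : 1 ≤ d) (H : Matrix (Fin d) (Fin d) ℝ) (β : ℝ) (hβ : 0 < β)
    (hH : H.PosSemidef) (hHβ : (β • (1 : Matrix (Fin d) (Fin d) ℝ) - H).PosSemidef)
    (δ η : ℝ) (hδ : δ ∈ Set.Ioc (0 : ℝ) (1 / 2)) (hη : η ∈ Set.Ioc (0 : ℝ) (1 / (8 * β)))
    (A : Matrix (Fin 3 × Fin d) (Fin 3 × Fin d) ℝ)
    (hA : A = blk3 ![![(1 - δ) • 1, 0, (-η) • 1], ![1, 0, 0], ![H, -H, 0]]) :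
    (∀ lam ∈ spectrum ℂ (A.map (Complex.ofReal ·)), ‖lam‖ < 1 - δ / 2) ∧
      (∀ lam ∈ spectrum ℂ (A.map (Complex.ofReal ·)), ‖lam‖ < 1) :=
  stmt0_general d H β hβ hH hHβ δ η hδ hη A hA
end
end

section
/- Let d ≥ 1, let H be a d×d real symmetric matrix, let δ, η ∈ ℝ, and let A be the 3d×3d block matrix [[(1−δ)I, 0, −ηI], [I, 0, 0], [H, −H, 0]]. If λ ∈ ℂ with λ ≠ 0 is an eigenvalue of A (over ℂ), then there exists a real eigenvalue σ of H such that λ³ − (1−δ)λ² + ησλ − ησ = 0. -/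
open Matrix
open scoped ComplexOrder

noncomputable section

lemma spec_det {n K : Type*} [Fintype n] [DecidableEq n] [Field K] (M : Matrix n n K) (μ : K) :
    μ ∈ spectrum K M ↔ (μ • (1 : Matrix n n K) - M).det = 0 := by
  rw [spectrum.mem_iff, Matrix.isUnit_iff_isUnit_det, isUnit_iff_ne_zero, not_ne_iff,
    Algebra.algebraMap_eq_smul_one]


/-- Eigenvalue–cubic correspondence for the meta-optimization dynamics matrix: any nonzero
complex eigenvalue `λ` of `A = [[(1−δ)I, 0, −ηI], [I, 0, 0], [H, −H, 0]]` satisfies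
`λ³ − (1−δ)λ² + ησλ − ησ = 0` for some real eigenvalue `σ` of the symmetric matrix `H`. -/
theorem stmt1 (d : ℕ) (hd : 1 ≤ d) (H : Matrix (Fin d) (Fin d) ℝ) (hH : H.IsSymm)
    (δ η : ℝ) (A : Matrix (Fin 3 × Fin d) (Fin 3 × Fin d) ℝ)
    (hA : A = blk3 ![![(1 - δ) • 1, 0, (-η) • 1], ![1, 0, 0], ![H, -H, 0]])
    (lam : ℂ) (hlam : lam ∈ spectrum ℂ (A.map (Complex.ofReal ·))) (hlam0 : lam ≠ 0) :
    ∃ σ : ℝ, σ ∈ spectrum ℝ H ∧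
      lam ^ 3 - (1 - (δ : ℂ)) * lam ^ 2 + (η : ℂ) * (σ : ℂ) * lam - (η : ℂ) * (σ : ℂ) = 0 := by
  set M := A.map (Complex.ofReal ·) with hM
  -- extract an eigenvector
  have hdet : (lam • (1 : Matrix (Fin 3 × Fin d) (Fin 3 × Fin d) ℂ) - M).det = 0 :=
    (spec_det M lam).mp hlam
  obtain ⟨v, hv0, hmv⟩ := Matrix.exists_mulVec_eq_zero_iff.mpr hdet
  have hv : M *ᵥ v = lam • v := by
    have := hmv
    rw [sub_mulVec, smul_mulVec, one_mulVec, sub_eq_zero] at this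
    exact this.symm
  -- component equations
  have e1 : ∀ i, (1 - (δ:ℂ)) * v (0, i) - η * v (2, i) = lam * v (0, i) := by
    intro i
    have h := congrFun hv (0, i)
    simp only [hM, mulVec, dotProduct, Fintype.sum_prod_type, hA, blk3, map_apply, of_apply,
      Fin.sum_univ_three, Matrix.smul_apply, Matrix.one_apply, Matrix.zero_apply, smul_eq_mul,
      mul_ite, mul_one, mul_zero, ite_mul, zero_mul, Finset.sum_ite_eq, Finset.mem_univ, if_true,
      Pi.smul_apply, Matrix.cons_val', Matrix.cons_val_zero, Matrix.cons_val_one,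
      Matrix.head_cons, Matrix.cons_val_two, Matrix.tail_cons, apply_ite Complex.ofReal,
      Matrix.empty_val', Matrix.cons_val_fin_one, Matrix.head_fin_const, Complex.ofReal_zero,
      Complex.ofReal_mul, Complex.ofReal_sub, Complex.ofReal_one, Complex.ofReal_neg,
      add_zero, zero_add, Finset.sum_const_zero] at h
    rw [← h]; ring
  have e2 : ∀ i, v (0, i) = lam * v (1, i) := by
    intro i
    have h := congrFun hv (1, i)
    simp only [hM, mulVec, dotProduct, Fintype.sum_prod_type, hA, blk3, map_apply, of_apply,
      Fin.sum_univ_three, Matrix.smul_apply, Matrix.one_apply, Matrix.zero_apply, smul_eq_mul,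
      mul_ite, mul_one, mul_zero, ite_mul, zero_mul, Finset.sum_ite_eq, Finset.mem_univ, if_true,
      Pi.smul_apply, Matrix.cons_val', Matrix.cons_val_zero, Matrix.cons_val_one,
      Matrix.head_cons, Matrix.cons_val_two, Matrix.tail_cons, apply_ite Complex.ofReal,
      Matrix.empty_val', Matrix.cons_val_fin_one, Matrix.head_fin_const, Complex.ofReal_zero,
      Complex.ofReal_mul, Complex.ofReal_sub, Complex.ofReal_one, Complex.ofReal_neg,
      add_zero, zero_add, Finset.sum_const_zero] at h
    linear_combination h
  have e3 : ∀ i, (∑ k, (H i k : ℂ) * v (0, k)) - (∑ k, (H i k : ℂ) * v (1, k))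
      = lam * v (2, i) := by
    intro i
    have h := congrFun hv (2, i)
    simp only [hM, mulVec, dotProduct, Fintype.sum_prod_type, hA, blk3, map_apply, of_apply,
      Fin.sum_univ_three, Matrix.smul_apply, Matrix.one_apply, Matrix.zero_apply, smul_eq_mul,
      mul_ite, mul_one, mul_zero, ite_mul, zero_mul, Finset.sum_ite_eq, Finset.mem_univ, if_true,
      Pi.smul_apply, Matrix.cons_val', Matrix.cons_val_zero, Matrix.cons_val_one,
      Matrix.head_cons, Matrix.cons_val_two, Matrix.tail_cons, apply_ite Complex.ofReal,
      Matrix.neg_apply, Complex.ofReal_neg, neg_mul, Finset.sum_neg_distrib,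
      Matrix.empty_val', Matrix.cons_val_fin_one, Matrix.head_fin_const, Complex.ofReal_zero,
      Complex.ofReal_mul, Complex.ofReal_sub, Complex.ofReal_one,
      add_zero, zero_add, Finset.sum_const_zero] at h
    rw [← h]; ring
  -- the first block of v is nonzero
  set x : Fin d → ℂ := fun k => v (0, k) with hxdef
  have hx0 : x ≠ 0 := by
    intro hx
    apply hv0
    have h0 : ∀ k, v (0, k) = 0 := fun k => congrFun hx k
    have h1 : ∀ k, v (1, k) = 0 := by
      intro k
      have := e2 k
      rw [h0 k] at this
      exact (mul_eq_zero.mp this.symm).resolve_left hlam0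
    have h2 : ∀ k, v (2, k) = 0 := by
      intro k
      have := e3 k
      simp only [h0, h1, mul_zero, Finset.sum_const_zero, sub_zero, zero_sub, neg_zero] at this
      exact (mul_eq_zero.mp this.symm).resolve_left hlam0
    funext p
    obtain ⟨a, i⟩ := p
    fin_cases a
    · exact h0 i
    · exact h1 i
    · exact h2 i
  have hSy : ∀ i, lam * (∑ k, (H i k : ℂ) * v (1, k)) = ∑ k, (H i k : ℂ) * v (0, k) := by
    intro i
    rw [Finset.mul_sum]
    exact Finset.sum_congr rfl fun k _ => by rw [e2 k]; ring
  have hkey : ∀ i, ((η:ℂ) * (lam - 1)) * (∑ k, (H i k : ℂ) * v (0, k))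
      = lam ^ 2 * ((1 - (δ:ℂ)) - lam) * v (0, i) := by
    intro i
    linear_combination (η:ℂ) * lam * (e3 i) + (η:ℂ) * (hSy i) - lam ^ 2 * (e1 i)
  -- H is Hermitian (real symmetric)
  have hHerm : H.IsHermitian := by
    rwa [Matrix.IsHermitian, Matrix.conjTranspose_eq_transpose_of_trivial]
  by_cases he : (η:ℂ) * (lam - 1) = 0
  · -- degenerate case: λ = 1 - δ, any eigenvalue of H works
    obtain ⟨i, hi⟩ : ∃ i, x i ≠ 0 := by
      by_contra hall
      push_neg at hall
      exact hx0 (funext hall)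
    have h0 : lam ^ 2 * ((1 - (δ:ℂ)) - lam) * v (0, i) = 0 := by
      rw [← hkey i, he, zero_mul]
    have hlc : (1 - (δ:ℂ)) - lam = 0 := by
      rcases mul_eq_zero.mp h0 with h | h
      · rcases mul_eq_zero.mp h with h | h
        · exact absurd (pow_eq_zero_iff (by norm_num) |>.mp h) hlam0
        · exact h
      · exact absurd h hi
    refine ⟨hHerm.eigenvalues ⟨0, hd⟩, hHerm.eigenvalues_mem_spectrum_real _, ?_⟩
    linear_combination ((hHerm.eigenvalues ⟨0, hd⟩ : ℂ)) * he - lam ^ 2 * hlc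
  · -- main case: x is an eigenvector of H with eigenvalue c
    set c : ℂ := lam ^ 2 * ((1 - (δ:ℂ)) - lam) / ((η:ℂ) * (lam - 1)) with hcdef
    have hce : c * ((η:ℂ) * (lam - 1)) = lam ^ 2 * ((1 - (δ:ℂ)) - lam) :=
      div_mul_cancel₀ _ he
    set Hc : Matrix (Fin d) (Fin d) ℂ := H.map (Complex.ofReal ·) with hHc
    have hHcHerm : Hc.IsHermitian := by
      ext i j
      simp only [hHc, Matrix.conjTranspose_apply, Matrix.map_apply, Complex.star_def, Complex.conj_ofReal]
      rw [← hH.apply i j]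
    have heig : Hc *ᵥ x = c • x := by
      funext i
      have : ((η:ℂ) * (lam - 1)) * (∑ k, (H i k : ℂ) * v (0, k))
          = ((η:ℂ) * (lam - 1)) * (c * v (0, i)) := by
        rw [hkey i, ← hce]; ring
      have hsum : (∑ k, (H i k : ℂ) * v (0, k)) = c * v (0, i) :=
        mul_left_cancel₀ he this
      simp only [mulVec, dotProduct, hHc, Matrix.map_apply, Pi.smul_apply, smul_eq_mul, hxdef]
      exact hsum
    -- c is real
    have hs : dotProduct (star x) x ≠ 0 := fun h => hx0 (dotProduct_star_self_eq_zero.mp h)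
    have hc1 : dotProduct (star x) (Hc *ᵥ x) = c * dotProduct (star x) x := by
      rw [heig, dotProduct_smul, smul_eq_mul]
    have hc2 : dotProduct (star x) (Hc *ᵥ x)
        = (starRingEnd ℂ) c * dotProduct (star x) x := by
      rw [dotProduct_mulVec]
      have : star x ᵥ* Hc = (starRingEnd ℂ) c • star x := by
        have h1 : star (Hc *ᵥ x) = star x ᵥ* Hc := by
          rw [star_mulVec, hHcHerm.eq]
        rw [← h1, heig, star_smul]
        rfl
      rw [this, smul_dotProduct, smul_eq_mul]
    have hconj : (starRingEnd ℂ) c = c := by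
      have : (c - (starRingEnd ℂ) c) * dotProduct (star x) x = 0 := by
        rw [sub_mul, ← hc1, ← hc2, sub_self]
      rcases mul_eq_zero.mp this with h | h
      · exact (sub_eq_zero.mp h).symm
      · exact absurd h hs
    have hcre : ((c.re : ℝ) : ℂ) = c := Complex.conj_eq_iff_re.mp hconj
    refine ⟨c.re, ?_, ?_⟩
    · -- c.re ∈ spectrum ℝ H
      rw [spec_det]
      have hker : (c • (1 : Matrix (Fin d) (Fin d) ℂ) - Hc) *ᵥ x = 0 := by
        rw [sub_mulVec, smul_mulVec, one_mulVec, heig, sub_self]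
      have hdetc : (c • (1 : Matrix (Fin d) (Fin d) ℂ) - Hc).det = 0 :=
        Matrix.exists_mulVec_eq_zero_iff.mp ⟨x, hx0, hker⟩
      have hmap : (c • (1 : Matrix (Fin d) (Fin d) ℂ) - Hc)
          = (c.re • (1 : Matrix (Fin d) (Fin d) ℝ) - H).map (Complex.ofReal ·) := by
        ext i j
        simp only [Matrix.sub_apply, Matrix.smul_apply, Matrix.map_apply, Matrix.one_apply,
          smul_eq_mul, hHc, Complex.ofReal_sub, Complex.ofReal_mul, apply_ite Complex.ofReal,
          Complex.ofReal_one, Complex.ofReal_zero, hcre]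
      rw [hmap] at hdetc
      have : ((c.re • (1 : Matrix (Fin d) (Fin d) ℝ) - H).map (Complex.ofReal ·)).det
          = ((c.re • (1 : Matrix (Fin d) (Fin d) ℝ) - H).det : ℂ) := by
        rw [← Complex.ofRealHom_eq_coe, RingHom.map_det]
        rfl
      rw [this] at hdetc
      exact_mod_cast hdetc
    · linear_combination hce + ((η:ℂ) * (lam - 1)) * hcre
end
end

section
/- Let c ∈ ℝ with |c| ≤ 1/8 and let δ ∈ (0, 1/2]. Then every complex root λ of the cubic λ³ − (1−δ)λ² + cλ − c = 0 satisfies |λ| < 1 − δ/2. -/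
/-! Write the cubic as `λ²(λ − a) = c(1 − λ)` with `a = 1 − δ`. If `|λ| ≥ 1 − δ/2`, then
`|λ − a| ≥ δ/2`, so `|1 − λ| ≤ |λ − a| + δ ≤ 3|λ − a|`; taking moduli gives
`|λ|² ≤ 3|c| ≤ 3/8`, contradicting `|λ|² ≥ 9/16`. -/

lemma norm_sq_le_of_sq_mul_sub_eq {𝕜 : Type*} [NormedField 𝕜] {z a c : 𝕜}
    (h : z ^ 2 * (z - a) = c * (1 - z)) (hza : z ≠ a) (hgap : ‖1 - a‖ ≤ 2 * ‖z - a‖) :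
    ‖z‖ ^ 2 ≤ 3 * ‖c‖ := by
  have hpos : 0 < ‖z - a‖ := norm_pos_iff.mpr (sub_ne_zero.mpr hza)
  have hone : ‖1 - z‖ ≤ 3 * ‖z - a‖ := by
    have := norm_sub_le_norm_sub_add_norm_sub 1 a z
    rw [norm_sub_rev a z] at this
    linarith
  refine le_of_mul_le_mul_right ?_ hpos
  calc ‖z‖ ^ 2 * ‖z - a‖ = ‖c‖ * ‖1 - z‖ := by rw [← norm_pow, ← norm_mul, h, norm_mul]
    _ ≤ ‖c‖ * (3 * ‖z - a‖) := by gcongr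
    _ = 3 * ‖c‖ * ‖z - a‖ := by ring

/-- Root-location bound for the cubic `λ³ − (1−δ)λ² + cλ − c`: if `|c| ≤ 1/8` and
`δ ∈ (0, 1/2]`, then every complex root has modulus `< 1 − δ/2`. -/
theorem stmt2 (c : ℝ) (hc : |c| ≤ 1 / 8) (δ : ℝ) (hδ : δ ∈ Set.Ioc (0 : ℝ) (1 / 2))
    (lam : ℂ) (hlam : lam ^ 3 - (1 - (δ : ℂ)) * lam ^ 2 + (c : ℂ) * lam - (c : ℂ) = 0) :
    ‖lam‖ < 1 - δ / 2 := by
  obtain ⟨hδ0, hδ1⟩ := hδ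
  by_contra! hbig
  set a : ℂ := ((1 - δ : ℝ) : ℂ) with ha
  have hfactor : lam ^ 2 * (lam - a) = c * (1 - lam) := by
    rw [ha]; push_cast; linear_combination hlam
  have hnorm_a : ‖a‖ = 1 - δ := by
    rw [ha, Complex.norm_real, Real.norm_of_nonneg (by linarith)]
  have hnorm_one_sub_a : ‖1 - a‖ = δ := by
    rw [ha, ← Complex.ofReal_one, ← Complex.ofReal_sub, Complex.norm_real, sub_sub_cancel,
      Real.norm_of_nonneg hδ0.le]
  have hgap : δ / 2 ≤ ‖lam - a‖ := by
    have := norm_sub_norm_le lam a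
    linarith
  have hza : lam ≠ a := fun h ↦ by rw [h, sub_self, norm_zero] at hgap; linarith
  have hsq := norm_sq_le_of_sq_mul_sub_eq hfactor hza (by linarith)
  rw [Complex.norm_real, Real.norm_eq_abs] at hsq
  nlinarith
end

section
/- Let d ≥ 1, let H be any d×d real matrix, let δ, η ∈ ℝ, and let λ ∈ ℂ with λ ≠ 0. Then the determinant of the 3d×3d complex matrix [[(1−δ−λ)I, 0, −ηI], [I, −λI, 0], [H, −H, −λI]] equals λ^{2d} · det((1−δ−λ)I − (η/λ)H + (η/λ²)H). -/
/-!
Both lower diagonal blocks are the scalar matrix `-λ I`, invertible for `λ ≠ 0`. Taking the Schur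
complement of the last block row and column, and then again of the middle one, each contributes a
factor `(-λ)^d` and leaves `A - c⁻¹ B P + c⁻² B Q C` for the block pattern
`[[A, 0, B], [C, c I, 0], [P, Q, c I]]`; with `c = -λ`, `B = -η I`, `P = H`, `Q = -H`, `C = I`
this is the matrix on the right.
-/

open Matrix

noncomputable section

theorem Matrix.det_fromBlocks_smul_one₂₂ {K m n : Type*} [Field K] [Fintype m] [DecidableEq m]
    [Fintype n] [DecidableEq n] (A : Matrix m m K) (B : Matrix m n K) (C : Matrix n m K) {c : K}
    (hc : c ≠ 0) :
    (fromBlocks A B C (c • 1)).det = c ^ Fintype.card n * (A - c⁻¹ • (B * C)).det := by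
  let _ : Invertible (c • 1 : Matrix n n K) :=
    ⟨c⁻¹ • 1, by simp [smul_smul, hc], by simp [smul_smul, hc]⟩
  rw [det_fromBlocks₂₂, det_smul, det_one, mul_one]
  congr 2
  have : (⅟(c • 1) : Matrix n n K) = c⁻¹ • 1 := rfl
  rw [this, Matrix.mul_smul, Matrix.mul_one, Matrix.smul_mul]

def blk3IndexEquiv (d : ℕ) : Fin 3 × Fin d ≃ (Fin d ⊕ Fin d) ⊕ Fin d where
  toFun p := ![Sum.inl (Sum.inl p.2), Sum.inl (Sum.inr p.2), Sum.inr p.2] p.1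
  invFun := Sum.elim (Sum.elim ((0, ·)) ((1, ·))) ((2, ·))
  left_inv := by rintro ⟨a, i⟩; fin_cases a <;> rfl
  right_inv := by rintro ((i | i) | i) <;> rfl

theorem blk3_eq_submatrix_fromBlocks {R : Type*} {d : ℕ}
    (B : Fin 3 → Fin 3 → Matrix (Fin d) (Fin d) R) :
    blk3 B = (fromBlocks (fromBlocks (B 0 0) (B 0 1) (B 1 0) (B 1 1))
      (fromRows (B 0 2) (B 1 2)) (fromCols (B 2 0) (B 2 1)) (B 2 2)).submatrix
      (blk3IndexEquiv d) (blk3IndexEquiv d) := by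
  ext ⟨a, i⟩ ⟨b, j⟩
  fin_cases a <;> fin_cases b <;> rfl

theorem det_blk3_smul_one {K : Type*} [Field K] {d : ℕ} (A B C P Q : Matrix (Fin d) (Fin d) K)
    {c : K} (hc : c ≠ 0) :
    (blk3 ![![A, 0, B], ![C, c • 1, 0], ![P, Q, c • 1]]).det
      = c ^ (2 * d) * (A - c⁻¹ • (B * P) + c⁻¹ ^ 2 • (B * Q * C)).det := by
  rw [blk3_eq_submatrix_fromBlocks, det_submatrix_equiv_self]
  simp only [Matrix.cons_val]
  rw [det_fromBlocks_smul_one₂₂ _ _ _ hc, fromRows_mul_fromCols, fromBlocks_smul, sub_eq_add_neg,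
    fromBlocks_neg, fromBlocks_add]
  simp only [Matrix.zero_mul, smul_zero, neg_zero, add_zero, ← sub_eq_add_neg, zero_sub]
  rw [det_fromBlocks_smul_one₂₂ _ _ _ hc, ← mul_assoc, ← pow_add, Fintype.card_fin, ← two_mul]
  congr 2
  rw [Matrix.neg_mul, Matrix.smul_mul, smul_neg, sub_neg_eq_add, smul_smul, sq]

theorem stmt3_general (d : ℕ) (H : Matrix (Fin d) (Fin d) ℝ) (δ η : ℝ)
    (lam : ℂ) (hlam0 : lam ≠ 0) :
    (blk3 ![![(1 - (δ : ℂ) - lam) • 1, 0, (-(η : ℂ)) • 1],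
            ![1, (-lam) • 1, 0],
            ![H.map (Complex.ofReal ·), -(H.map (Complex.ofReal ·)), (-lam) • 1]]).det
      = lam ^ (2 * d) *
        ((1 - (δ : ℂ) - lam) • (1 : Matrix (Fin d) (Fin d) ℂ)
          - ((η : ℂ) / lam) • H.map (Complex.ofReal ·)
          + ((η : ℂ) / lam ^ 2) • H.map (Complex.ofReal ·)).det := by
  rw [det_blk3_smul_one _ _ _ _ _ (neg_ne_zero.mpr hlam0), (even_two_mul d).neg_pow]
  congr 2
  simp only [Matrix.smul_mul, Matrix.one_mul, Matrix.mul_one, Matrix.mul_neg]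
  module

/-- Block-determinant factorization used in the proof of Lemma 3.3: for `λ ≠ 0`,
`det [[(1−δ−λ)I, 0, −ηI], [I, −λI, 0], [H, −H, −λI]]
  = λ^{2d} · det((1−δ−λ)I − (η/λ)H + (η/λ²)H)`. -/
theorem stmt3 (d : ℕ) (hd : 1 ≤ d) (H : Matrix (Fin d) (Fin d) ℝ) (δ η : ℝ)
    (lam : ℂ) (hlam0 : lam ≠ 0) :
    (blk3 ![![(1 - (δ : ℂ) - lam) • 1, 0, (-(η : ℂ)) • 1],
            ![1, (-lam) • 1, 0],
            ![H.map (Complex.ofReal ·), -(H.map (Complex.ofReal ·)), (-lam) • 1]]).det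
      = lam ^ (2 * d) *
        ((1 - (δ : ℂ) - lam) • (1 : Matrix (Fin d) (Fin d) ℂ)
          - ((η : ℂ) / lam) • H.map (Complex.ofReal ·)
          + ((η : ℂ) / lam ^ 2) • H.map (Complex.ofReal ·)).det :=
  stmt3_general d H δ η lam hlam0
end
end

section
/- Let d ≥ 1, let H, K₁, K₂, K₃ be d×d real matrices, let δ, η ∈ ℝ, and let λ ∈ ℂ with λ ≠ 0. If λ is an eigenvalue (over ℂ) of the 3d×3d closed-loop block matrix [[(1−δ)I + K₁, K₂, −ηI + K₃], [I, 0, 0], [H, −H, 0]], then λ + δ − 1 is an eigenvalue of the d×d complex matrix K₁ + ((λ−1)/λ²)(K₃ − ηI)H + (1/λ)K₂. -/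
open Matrix

noncomputable section

lemma spec_iff {n : Type*} [Fintype n] [DecidableEq n] (M : Matrix n n ℂ) (μ : ℂ) :
    μ ∈ spectrum ℂ M ↔ ∃ v : n → ℂ, v ≠ 0 ∧ M *ᵥ v = μ • v := by
  rw [← AlgEquiv.spectrum_eq Matrix.toLinAlgEquiv' M, ← Module.End.hasEigenvalue_iff_mem_spectrum]
  constructor
  · rintro h
    obtain ⟨v, hv⟩ := h.exists_hasEigenvector
    exact ⟨v, hv.2, by simpa [Matrix.toLinAlgEquiv'_apply] using hv.1⟩
  · rintro ⟨v, hv0, hv⟩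
    exact Module.End.hasEigenvalue_of_hasEigenvector
      ⟨Module.End.mem_eigenspace_iff.mpr (by simpa [Matrix.toLinAlgEquiv'_apply] using hv), hv0⟩

lemma blk3_map_mulVec {d : ℕ} (B : Fin 3 → Fin 3 → Matrix (Fin d) (Fin d) ℝ)
    (v : Fin 3 × Fin d → ℂ) (i : Fin 3) (p : Fin d) :
    ((blk3 B).map (Complex.ofReal ·) *ᵥ v) (i, p)
      = ∑ j : Fin 3, (((B i j).map (Complex.ofReal ·)) *ᵥ fun s => v (j, s)) p := by
  simp [Matrix.mulVec, dotProduct, blk3, Fintype.sum_prod_type, Matrix.map_apply]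

lemma map_smul_one_add {d : ℕ} (M : Matrix (Fin d) (Fin d) ℝ) (r : ℝ) :
    (r • (1 : Matrix (Fin d) (Fin d) ℝ) + M).map (Complex.ofReal ·)
      = (r : ℂ) • 1 + M.map (Complex.ofReal ·) := by
  ext p q
  simp only [Matrix.map_apply, Matrix.add_apply, Matrix.smul_apply, Matrix.one_apply]
  push_cast
  split_ifs <;> simp

/-- Section 3.1: if `λ ≠ 0` is an eigenvalue of the closed-loop matrix
`[[(1−δ)I + K₁, K₂, −ηI + K₃], [I, 0, 0], [H, −H, 0]]`, then `λ + δ − 1` is an eigenvalue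
of `K₁ + ((λ−1)/λ²)(K₃ − ηI)H + (1/λ)K₂`. -/
theorem stmt4 (d : ℕ) (hd : 1 ≤ d) (H K₁ K₂ K₃ : Matrix (Fin d) (Fin d) ℝ) (δ η : ℝ)
    (lam : ℂ) (hlam0 : lam ≠ 0)
    (hlam : lam ∈ spectrum ℂ
      ((blk3 ![![(1 - δ) • 1 + K₁, K₂, (-η) • 1 + K₃], ![1, 0, 0], ![H, -H, 0]]).map
        (Complex.ofReal ·))) :
    lam + (δ : ℂ) - 1 ∈ spectrum ℂ
      (K₁.map (Complex.ofReal ·)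
        + ((lam - 1) / lam ^ 2) •
            ((K₃.map (Complex.ofReal ·) - (η : ℂ) • 1) * H.map (Complex.ofReal ·))
        + (1 / lam) • K₂.map (Complex.ofReal ·)) := by
  obtain ⟨v, hv0, hv⟩ := (spec_iff _ _).mp hlam
  set c : ℝ → ℂ := (Complex.ofReal ·) with hc
  set x0 : Fin d → ℂ := fun s => v (0, s) with hx0def
  set x1 : Fin d → ℂ := fun s => v (1, s) with hx1def
  set x2 : Fin d → ℂ := fun s => v (2, s) with hx2def
  set Hc := H.map c with hHc
  set K₁c := K₁.map c with hK₁c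
  set K₂c := K₂.map c with hK₂c
  set K₃c := K₃.map c with hK₃c
  have hrow : ∀ (i : Fin 3), (∑ j : Fin 3,
      (((![![(1 - δ) • 1 + K₁, K₂, (-η) • 1 + K₃], ![1, 0, 0], ![H, -H, 0]] i j).map c) *ᵥ
        fun s => v (j, s))) = lam • fun s => v (i, s) := by
    intro i
    funext p
    rw [Finset.sum_apply, ← blk3_map_mulVec, hv]
    rfl
  have hneg : (-H).map c = -Hc := by ext p q; simp [Matrix.map_apply, hHc, hc]
  have h1 : (1 : Matrix (Fin d) (Fin d) ℝ).map c = 1 := by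
    ext p q
    simp only [Matrix.map_apply, Matrix.one_apply]
    split_ifs <;> simp [hc]
  have h0 : (0 : Matrix (Fin d) (Fin d) ℝ).map c = 0 := by ext p q; simp [Matrix.map_apply, hc]
  have E0 : ((1 : ℂ) - δ) • x0 + K₁c *ᵥ x0 + (K₂c *ᵥ x1 +
      ((-(η:ℂ)) • x2 + K₃c *ᵥ x2)) = lam • x0 := by
    have := hrow 0
    rw [Fin.sum_univ_three] at this
    simp only [Matrix.cons_val_zero, Matrix.cons_val_one, Matrix.head_cons,
      Matrix.cons_val_two, Matrix.tail_cons] at this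
    rw [map_smul_one_add, map_smul_one_add, add_mulVec, add_mulVec,
      smul_mulVec, smul_mulVec, one_mulVec, one_mulVec] at this
    push_cast at this ⊢
    rw [add_assoc] at this
    exact this
  have E1 : x0 = lam • x1 := by
    have := hrow 1
    rw [Fin.sum_univ_three] at this
    simp only [Matrix.cons_val_zero, Matrix.cons_val_one, Matrix.head_cons,
      Matrix.cons_val_two, Matrix.tail_cons] at this
    rw [h1, h0, one_mulVec, zero_mulVec] at this
    simpa using this
  have E2 : Hc *ᵥ x0 - Hc *ᵥ x1 = lam • x2 := by
    have := hrow 2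
    rw [Fin.sum_univ_three] at this
    simp only [Matrix.cons_val_zero, Matrix.cons_val_one, Matrix.head_cons,
      Matrix.cons_val_two, Matrix.tail_cons] at this
    rw [hneg, h0, zero_mulVec, neg_mulVec] at this
    simpa [sub_eq_add_neg] using this
  set C : ℂ := lam⁻¹ - lam⁻¹ * lam⁻¹ with hC
  have hx1 : x1 = lam⁻¹ • x0 := by rw [E1, smul_smul, inv_mul_cancel₀ hlam0, one_smul]
  have hx2 : x2 = C • (Hc *ᵥ x0) := by
    have h : x2 = lam⁻¹ • (Hc *ᵥ x0 - Hc *ᵥ x1) := by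
      rw [E2, smul_smul, inv_mul_cancel₀ hlam0, one_smul]
    rw [h, hx1, Matrix.mulVec_smul, hC]
    module
  have hx0 : x0 ≠ 0 := by
    intro h
    apply hv0
    have h1' : x1 = 0 := by rw [hx1, h, smul_zero]
    have h2' : x2 = 0 := by rw [hx2, h, Matrix.mulVec_zero, smul_zero]
    funext q
    obtain ⟨i, p⟩ := q
    fin_cases i
    · exact congrFun h p
    · exact congrFun h1' p
    · exact congrFun h2' p
  refine (spec_iff _ _).mpr ⟨x0, hx0, ?_⟩
  have hcoef : (lam - 1) / lam ^ 2 = C := by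
    rw [hC, div_eq_iff (pow_ne_zero 2 hlam0)]
    field_simp
  -- substitute into E0
  rw [hx1, hx2, Matrix.mulVec_smul, Matrix.mulVec_smul] at E0
  have key2 : K₁c *ᵥ x0 + C • (K₃c *ᵥ (Hc *ᵥ x0) - (η:ℂ) • (Hc *ᵥ x0))
      + lam⁻¹ • (K₂c *ᵥ x0) = (lam + (δ:ℂ) - 1) • x0 := by
    have h2 : K₁c *ᵥ x0 + C • (K₃c *ᵥ (Hc *ᵥ x0) - (η:ℂ) • (Hc *ᵥ x0))
        + lam⁻¹ • (K₂c *ᵥ x0) = lam • x0 - ((1:ℂ) - δ) • x0 := by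
      rw [← E0]; module
    rw [h2, ← sub_smul]
    congr 1
    ring
  rw [hcoef, one_div]
  rw [add_mulVec, add_mulVec, smul_mulVec, smul_mulVec,
    ← Matrix.mulVec_mulVec, sub_mulVec, smul_mulVec, one_mulVec]
  rw [← key2]
end
end

section
/- Let d ≥ 1, let H be a d×d real symmetric matrix with 0 ⪯ H ⪯ βI for some β > 0, let δ ∈ (0, 1/2], and let η, η′ ∈ ℝ with |η′ − η| ≤ 1/(8β). Then for every λ ∈ ℂ with λ ≠ 0 such that λ + δ − 1 is an eigenvalue of the d×d complex matrix ((λ−1)/λ²)(η′ − η)H, it holds that |λ| < 1 − δ/2. -/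
/-!
An eigenvector `v` of `c • H` with `c = (λ - 1) / λ² · (η' - η)` turns the spectral condition into
the scalar equation `λ + δ - 1 = (λ - 1) / λ² · s` with `s = (η' - η) t`, where the Rayleigh quotient
`t = v* H v / v* v` lies in `[0, β]`, so that `‖s‖ ≤ 1/8`. If `‖λ‖ ≥ 1 - δ/2 ≥ 3/4`, then
`μ = λ + δ - 1` satisfies `‖μ‖ ≥ δ/2 > 0` and `‖λ - 1‖ ≤ ‖μ‖ + δ ≤ 3‖μ‖`, whence
`9/16 · ‖μ‖ ≤ ‖μ‖ ‖λ‖² = ‖λ - 1‖ ‖s‖ ≤ 3/8 · ‖μ‖`, which is absurd.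
-/

open Matrix

noncomputable section

open scoped ComplexOrder

namespace Matrix

variable {n 𝕜 : Type*} [Fintype n] [RCLike 𝕜]

theorem PosSemidef.exists_dotProduct_mulVec_eq_mul [DecidableEq n] {A : Matrix n n 𝕜} {β : ℝ}
    (hA : A.PosSemidef) (hβA : ((β : 𝕜) • 1 - A).PosSemidef) {v : n → 𝕜} (hv : v ≠ 0) :
    ∃ t ∈ Set.Icc 0 β, star v ⬝ᵥ A *ᵥ v = t * (star v ⬝ᵥ v) := by
  obtain ⟨N, hN, hNv⟩ := RCLike.pos_iff_exists_ofReal.mp (dotProduct_star_self_pos_iff.mpr hv)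
  obtain ⟨q, hq, hqv⟩ := RCLike.nonneg_iff_exists_ofReal.mp (hA.dotProduct_mulVec_nonneg v)
  have hqβ : q ≤ β * N := by
    have := hβA.dotProduct_mulVec_nonneg v
    rwa [sub_mulVec, dotProduct_sub, smul_mulVec, dotProduct_smul, one_mulVec, ← hNv, ← hqv,
      sub_nonneg, smul_eq_mul, ← RCLike.ofReal_mul, RCLike.ofReal_le_ofReal] at this
  refine ⟨q / N, ⟨div_nonneg hq hN.le, (div_le_iff₀ hN).mpr hqβ⟩, ?_⟩
  rw [← hNv, ← hqv, ← RCLike.ofReal_mul, div_mul_cancel₀ q hN.ne']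

open scoped MatrixOrder in
theorem PosSemidef.map_ofReal_s5 {M : Matrix n n ℝ} (hM : M.PosSemidef) :
    (M.map (RCLike.ofReal : ℝ → 𝕜)).PosSemidef := by
  classical
  obtain ⟨B, rfl⟩ := CStarAlgebra.nonneg_iff_eq_star_mul_self.mp hM.nonneg
  rw [star_eq_conjTranspose, Matrix.map_mul (f := algebraMap ℝ 𝕜),
    conjTranspose_map _ fun x => (RCLike.conj_ofReal x).symm]
  exact posSemidef_conjTranspose_mul_self _

theorem exists_mulVec_eq_smul_of_mem_spectrum_s5 [DecidableEq n] {K : Type*} [Field K]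
    {A : Matrix n n K} {μ : K} (hμ : μ ∈ spectrum K A) : ∃ v ≠ 0, A *ᵥ v = μ • v := by
  rw [← spectrum_toLin', ← Module.End.hasEigenvalue_iff_mem_spectrum] at hμ
  obtain ⟨v, hv⟩ := hμ.exists_hasEigenvector
  exact ⟨v, hv.2, Module.End.mem_eigenspace_iff.mp hv.1⟩

theorem PosSemidef.exists_eq_mul_of_mem_spectrum_smul [DecidableEq n] {A : Matrix n n 𝕜} {β : ℝ}
    (hA : A.PosSemidef) (hβA : ((β : 𝕜) • 1 - A).PosSemidef) {c μ : 𝕜}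
    (hμ : μ ∈ spectrum 𝕜 (c • A)) : ∃ t ∈ Set.Icc 0 β, μ = c * t := by
  obtain ⟨v, hv, hAv⟩ := exists_mulVec_eq_smul_of_mem_spectrum_s5 hμ
  obtain ⟨t, ht, hq⟩ := hA.exists_dotProduct_mulVec_eq_mul hβA hv
  refine ⟨t, ht, mul_right_cancel₀ (dotProduct_star_self_pos_iff.mpr hv).ne' ?_⟩
  have := congrArg (star v ⬝ᵥ ·) hAv
  simp only [smul_mulVec, dotProduct_smul, smul_eq_mul, hq] at this
  rw [← this, mul_assoc]

end Matrix

theorem Complex.norm_lt_one_sub_half_of_eq {δ : ℝ} (hδ : δ ∈ Set.Ioc 0 (1 / 2)) {lam s : ℂ}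
    (hs : ‖s‖ ≤ 1 / 8) (h : lam + δ - 1 = (lam - 1) / lam ^ 2 * s) : ‖lam‖ < 1 - δ / 2 := by
  obtain ⟨hδ0, hδ2⟩ := hδ
  by_contra! hlam
  have hμ_ge : ‖lam‖ - (1 - δ) ≤ ‖lam + δ - 1‖ := by
    have := norm_sub_norm_le lam ((1 - δ : ℝ) : ℂ)
    rwa [Complex.norm_real, Real.norm_of_nonneg (by linarith),
      show lam - ((1 - δ : ℝ) : ℂ) = lam + δ - 1 by push_cast; ring] at this
  have hsub_le : ‖lam - 1‖ ≤ ‖lam + δ - 1‖ + δ := by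
    have := norm_sub_le (lam + δ - 1) δ
    rwa [Complex.norm_real, Real.norm_of_nonneg hδ0.le, show lam + δ - 1 - δ = lam - 1 by ring]
      at this
  have hlam0 : lam ≠ 0 := by
    rintro rfl
    simp at hlam; linarith
  have key : ‖lam + δ - 1‖ * ‖lam‖ ^ 2 = ‖lam - 1‖ * ‖s‖ := by
    rw [h, norm_mul, norm_div, norm_pow]
    field_simp
  have : ‖lam + δ - 1‖ * (9 / 16) ≤ ‖lam + δ - 1‖ * (3 / 8) :=
    calc ‖lam + δ - 1‖ * (9 / 16) ≤ ‖lam + δ - 1‖ * ‖lam‖ ^ 2 := by gcongr; nlinarith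
      _ = ‖lam - 1‖ * ‖s‖ := key
      _ ≤ 3 * ‖lam + δ - 1‖ * (1 / 8) := by gcongr; linarith
      _ = ‖lam + δ - 1‖ * (3 / 8) := by ring
  linarith

theorem stmt5_general (d : ℕ) (H : Matrix (Fin d) (Fin d) ℝ) (β : ℝ) (hβ : 0 < β)
    (hH : H.PosSemidef) (hHβ : (β • (1 : Matrix (Fin d) (Fin d) ℝ) - H).PosSemidef)
    (δ : ℝ) (hδ : δ ∈ Set.Ioc (0 : ℝ) (1 / 2))
    (η η' : ℝ) (hη : |η' - η| ≤ 1 / (8 * β))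
    (lam : ℂ)
    (hlam : lam + (δ : ℂ) - 1 ∈ spectrum ℂ
      ((((lam - 1) / lam ^ 2) * ((η' : ℂ) - (η : ℂ))) • H.map (Complex.ofReal ·))) :
    ‖lam‖ < 1 - δ / 2 := by
  have hβH : ((β : ℂ) • 1 - H.map (Complex.ofReal ·)).PosSemidef := by
    simpa [Matrix.map_sub, Matrix.map_smul, Matrix.map_one] using hHβ.map_ofReal_s5 (𝕜 := ℂ)
  obtain ⟨t, ⟨ht0, htβ⟩, hμ⟩ := hH.map_ofReal_s5.exists_eq_mul_of_mem_spectrum_smul hβH hlam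
  refine Complex.norm_lt_one_sub_half_of_eq hδ (s := (η' - η : ℝ) * t) ?_
    (by rw [hμ, ← RCLike.ofReal_eq_complex_ofReal]; push_cast; ring)
  calc ‖((η' - η : ℝ) : ℂ) * t‖ = |η' - η| * t := by
        rw [norm_mul, Complex.norm_real, Complex.norm_real, Real.norm_eq_abs,
          Real.norm_of_nonneg ht0]
    _ ≤ 1 / (8 * β) * β := by gcongr
    _ = 1 / 8 := by field_simp

/-- Gradient-descent lemma (Section 3.1.1): if `0 ⪯ H ⪯ βI`, `δ ∈ (0, 1/2]` and
`|η′ − η| ≤ 1/(8β)`, then any nonzero `λ ∈ ℂ` such that `λ + δ − 1` is an eigenvalue of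
`((λ−1)/λ²)(η′ − η)H` satisfies `|λ| < 1 − δ/2`. -/
theorem stmt5 (d : ℕ) (hd : 1 ≤ d) (H : Matrix (Fin d) (Fin d) ℝ) (β : ℝ) (hβ : 0 < β)
    (hH : H.PosSemidef) (hHβ : (β • (1 : Matrix (Fin d) (Fin d) ℝ) - H).PosSemidef)
    (δ : ℝ) (hδ : δ ∈ Set.Ioc (0 : ℝ) (1 / 2))
    (η η' : ℝ) (hη : |η' - η| ≤ 1 / (8 * β))
    (lam : ℂ) (hlam0 : lam ≠ 0)
    (hlam : lam + (δ : ℂ) - 1 ∈ spectrum ℂ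
      ((((lam - 1) / lam ^ 2) * ((η' : ℂ) - (η : ℂ))) • H.map (Complex.ofReal ·))) :
    ‖lam‖ < 1 - δ / 2 :=
  stmt5_general d H β hβ hH hHβ δ hδ η η' hη lam hlam
end
end

section
/- Let c ∈ ℂ with |c| ≤ 1/8 and let δ ∈ (0, 1/2]. Then every λ ∈ ℂ with λ ≠ 0 satisfying ((1−λ)/λ²)·c = λ + δ − 1 has |λ| < 1 − δ/2. -/
/-! Write `a = |λ + δ - 1|`. The equation gives `|1 - λ| |c| = |λ|² a`, while the triangle
inequality gives `|1 - λ| ≤ a + δ` and `|λ| ≤ a + 1 - δ`. If `|λ| ≥ 1 - δ/2`, then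
`a ≥ δ/2 > 0` and `|λ|² ≥ 9/16`, so `9a/16 ≤ |λ|² a ≤ (a + δ)/8 ≤ 3a/8`, which is absurd. -/

lemma lt_one_sub_half_of_mul_eq {r s a γ δ : ℝ} (hδ : 0 < δ) (hδ2 : δ ≤ 1 / 2)
    (hγ : γ ≤ 1 / 8) (hs : 0 ≤ s) (hs_le : s ≤ a + δ) (hr_le : r ≤ a + (1 - δ))
    (heq : s * γ = r ^ 2 * a) : r < 1 - δ / 2 := by
  by_contra! hr
  have ha : δ / 2 ≤ a := by linarith
  have hr2 : 9 / 16 ≤ r ^ 2 := by nlinarith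
  have hsγ : s * γ ≤ (a + δ) / 8 := by nlinarith
  nlinarith

lemma norm_lt_of_one_sub_mul_eq {c lam : ℂ} {δ : ℝ} (hc : ‖c‖ ≤ 1 / 8) (hδ : 0 < δ)
    (hδ2 : δ ≤ 1 / 2) (h : (1 - lam) * c = lam ^ 2 * (lam + δ - 1)) :
    ‖lam‖ < 1 - δ / 2 := by
  set a := ‖lam + δ - 1‖
  have hs : ‖1 - lam‖ ≤ a + δ :=
    calc ‖1 - lam‖ = ‖(lam + δ - 1) - δ‖ := by rw [← norm_neg]; ring_nf
      _ ≤ a + ‖(δ : ℂ)‖ := norm_sub_le _ _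
      _ = a + δ := by rw [Complex.norm_real, Real.norm_of_nonneg hδ.le]
  have hr : ‖lam‖ ≤ a + (1 - δ) :=
    calc ‖lam‖ = ‖(lam + δ - 1) + ((1 - δ : ℝ) : ℂ)‖ := by push_cast; ring_nf
      _ ≤ a + ‖((1 - δ : ℝ) : ℂ)‖ := norm_add_le _ _
      _ = a + (1 - δ) := by rw [Complex.norm_real, Real.norm_of_nonneg (by linarith)]
  have heq : ‖1 - lam‖ * ‖c‖ = ‖lam‖ ^ 2 * a := by
    simpa only [norm_mul, norm_pow] using congrArg norm h
  exact lt_one_sub_half_of_mul_eq hδ hδ2 hc (norm_nonneg _) hs hr heq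

/-- Scalar stabilization estimate (Sections 3.1.1 and 3.1.3): if `|c| ≤ 1/8` and
`δ ∈ (0, 1/2]`, then every nonzero `λ ∈ ℂ` with `((1−λ)/λ²)·c = λ + δ − 1` satisfies
`|λ| < 1 − δ/2`. -/
theorem stmt6 (c : ℂ) (hc : ‖c‖ ≤ 1 / 8) (δ : ℝ) (hδ : δ ∈ Set.Ioc (0 : ℝ) (1 / 2))
    (lam : ℂ) (hlam0 : lam ≠ 0) (hlam : ((1 - lam) / lam ^ 2) * c = lam + (δ : ℂ) - 1) :
    ‖lam‖ < 1 - δ / 2 := by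
  refine norm_lt_of_one_sub_mul_eq hc hδ.1 hδ.2 ?_
  field_simp at hlam
  linear_combination hlam
end

section
/- Let δ ∈ (0, 1/2], let v ∈ ℝ with 0 ≤ v ≤ δ, and let c ∈ ℝ with 0 ≤ c ≤ 1/8. Then every λ ∈ ℂ with λ ≠ 0 satisfying v/λ − v − c(λ−1)/λ² = λ + δ − 1 has |λ| < 1 − δ/4. -/
/-!
Clearing denominators, `λ` is a root of the real cubic
`p(z) = z³ + (v + δ - 1) z² + (c - v) z - c = (z - 1)(z² + v z + c) + δ z²`.
A real root `r` with `|r| ≥ 1 - δ/4 ≥ 7/8` is impossible: the term `δ r²` cannot be balanced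
by `(1 - r)(r² + v r + c)`, since `1 - r` is either negative or at most `δ/4`. A non-real root
comes with its conjugate, so the third root `t` is real and Vieta gives `t |λ|² = c`; if
`|λ|² ≥ 49/64` then `0 ≤ t ≤ 8/49`, and such a small `t` cannot be a root as long as `c > 0`,
while for `c = 0` the quadratic factor `z² + (v + δ - 1) z - v` has only real roots.
-/

open Complex

theorem eq_zero_and_eq_zero_of_ofReal_mul_add_ofReal {z : ℂ} (hz : z.im ≠ 0) {α β : ℝ}
    (h : (α : ℂ) * z + β = 0) : α = 0 ∧ β = 0 := by
  have hre := congrArg re h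
  have him := congrArg im h
  simp only [add_re, add_im, re_ofReal_mul, im_ofReal_mul, ofReal_re, ofReal_im, zero_re,
    zero_im, add_zero] at hre him
  have hα : α = 0 := (mul_eq_zero.mp him).resolve_right hz
  exact ⟨hα, by simpa [hα] using hre⟩

/-- The witness is the third root `t = -a - 2 re z`: the cubic factors as
`(w - t) (w² - 2 (re z) w + normSq z)`. -/
theorem exists_third_root_of_cubic_eq_zero {a b d : ℝ} {z : ℂ} (hz : z.im ≠ 0)
    (h : z ^ 3 + a * z ^ 2 + b * z + d = 0) :
    ∃ t : ℝ, t * normSq z = -d ∧ normSq z = t ^ 2 + a * t + b := by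
  have hquad : z ^ 2 - 2 * z.re * z + normSq z = 0 := by
    rw [← mul_conj, ← ofReal_ofNat, ← ofReal_mul, ← add_conj]; ring
  -- the remainder of dividing the cubic by the real quadratic with roots `z`, `conj z`
  have hrem : ((b - normSq z + 2 * z.re * (a + 2 * z.re) : ℝ) : ℂ) * z
      + (d - (a + 2 * z.re) * normSq z : ℝ) = 0 := by
    push_cast
    linear_combination h - (z + a + 2 * z.re) * hquad
  obtain ⟨h₁, h₂⟩ := eq_zero_and_eq_zero_of_ofReal_mul_add_ofReal hz hrem
  exact ⟨-a - 2 * z.re, by linarith, by linear_combination -h₁⟩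

theorem abs_lt_of_momentum_cubic_eq_zero {δ v c r : ℝ} (hδ0 : 0 < δ) (hδ : δ ≤ 1 / 2)
    (hv0 : 0 ≤ v) (hv : v ≤ 1 / 2) (hc0 : 0 ≤ c) (hc : c ≤ 1 / 8)
    (hr : r ^ 3 + (v + δ - 1) * r ^ 2 + (c - v) * r - c = 0) : |r| < 1 - δ / 4 := by
  have hfac : (1 - r) * (r ^ 2 + v * r + c) = δ * r ^ 2 := by linear_combination -hr
  rw [abs_lt]
  constructor
  · by_contra! hr'
    have : r ≤ -7 / 8 := by linarith
    nlinarith [mul_nonneg hv0 (neg_nonneg.mpr (by linarith : r ≤ 0))]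
  · by_contra! hr'
    rcases le_or_gt 1 r with h1 | h1
    · nlinarith [mul_nonneg (sub_nonneg.mpr h1) (by positivity : 0 ≤ r ^ 2 + v * r + c),
        mul_pos hδ0 (by positivity : 0 < r ^ 2)]
    · have hq : 0 ≤ r ^ 2 + v * r + c := by nlinarith
      have hq4 : r ^ 2 + v * r + c < 4 * r ^ 2 := by nlinarith
      nlinarith [mul_le_mul_of_nonneg_right (by linarith : 1 - r ≤ δ / 4) hq,
        mul_lt_mul_of_pos_left hq4 hδ0]

theorem lt_of_momentum_vieta {δ v c t N : ℝ} (hδ : δ ≤ 1 / 2)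
    (hv0 : 0 ≤ v) (hc0 : 0 ≤ c) (hc : c ≤ 1 / 8) (htN : t * N = c)
    (hN : N = t ^ 2 + (v + δ - 1) * t + (c - v)) : N < (1 - δ / 4) ^ 2 := by
  by_contra! hN'
  have hN49 : 49 / 64 ≤ N := by nlinarith
  have ht0 : 0 ≤ t := by nlinarith
  have ht : t ≤ 8 / 49 := by nlinarith
  rcases ht0.eq_or_lt with rfl | htpos
  · nlinarith
  · have hfac : (1 - t) * (t ^ 2 + v * t + c) = δ * t ^ 2 := by
      linear_combination t * hN - htN
    nlinarith [mul_le_mul_of_nonneg_left ht htpos.le]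

/-- Scalar estimate for momentum policies (Section 3.1.2): if `δ ∈ (0, 1/2]`,
`0 ≤ v ≤ δ` and `0 ≤ c ≤ 1/8`, then every nonzero `λ ∈ ℂ` with
`v/λ − v − c(λ−1)/λ² = λ + δ − 1` satisfies `|λ| < 1 − δ/4`. -/
theorem stmt8 (δ : ℝ) (hδ : δ ∈ Set.Ioc (0 : ℝ) (1 / 2))
    (v : ℝ) (hv0 : 0 ≤ v) (hvδ : v ≤ δ) (c : ℝ) (hc0 : 0 ≤ c) (hc : c ≤ 1 / 8)
    (lam : ℂ) (hlam0 : lam ≠ 0)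
    (hlam : (v : ℂ) / lam - (v : ℂ) - (c : ℂ) * (lam - 1) / lam ^ 2 = lam + (δ : ℂ) - 1) :
    ‖lam‖ < 1 - δ / 4 := by
  obtain ⟨hδ0, hδ⟩ := hδ
  have hv : v ≤ 1 / 2 := hvδ.trans hδ
  have hroot : lam ^ 3 + (v + δ - 1) * lam ^ 2 + (c - v) * lam - c = 0 := by
    field_simp at hlam
    linear_combination -hlam
  by_cases him : lam.im = 0
  · obtain ⟨r, rfl⟩ : ∃ r : ℝ, lam = r := ⟨lam.re, Complex.ext rfl (by simpa using him)⟩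
    rw [norm_real, Real.norm_eq_abs]
    exact abs_lt_of_momentum_cubic_eq_zero hδ0 hδ hv0 hv hc0 hc (by exact_mod_cast hroot)
  · obtain ⟨t, htN, hN⟩ := exists_third_root_of_cubic_eq_zero (a := v + δ - 1) (b := c - v)
      (d := -c) him (by push_cast; linear_combination hroot)
    have hnormSq := lt_of_momentum_vieta hδ hv0 hc0 hc (by linarith) hN
    rw [← Complex.sq_norm] at hnormSq
    exact lt_of_pow_lt_pow_left₀ 2 (by linarith) hnormSq
end

section
/- Let d ≥ 1, let H and P be d×d real matrices such that the spectral radius of PH satisfies ρ(PH) ≤ 1/8, and let δ ∈ (0, 1/2]. Then for every λ ∈ ℂ with λ ≠ 0 such that λ + δ − 1 is an eigenvalue of the d×d complex matrix −((λ−1)/λ²)PH, it holds that |λ| < 1 − δ/2. -/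
/-!
An eigenvalue of `c • A` is `c μ` for an eigenvalue `μ` of `A`, so `λ + δ - 1 = -((λ - 1)/λ²) μ`
with `|μ| ≤ 1/8`, i.e. `|λ|² |λ + δ - 1| ≤ |λ - 1| / 8`. If `|λ| ≥ 1 - δ/2 ≥ 3/4`, the triangle
inequality makes `|λ + δ - 1|` at least `δ/2` but also, via `|λ - 1| ≤ |λ + δ - 1| + δ`, at most
`2δ/7`.
-/

theorem Complex.norm_lt_one_sub_half_of_sq_mul_norm_le {z : ℂ} {δ : ℝ}
    (hδ : δ ∈ Set.Ioc (0 : ℝ) (1 / 2)) (h : ‖z‖ ^ 2 * ‖z + δ - 1‖ ≤ ‖z - 1‖ / 8) :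
    ‖z‖ < 1 - δ / 2 := by
  obtain ⟨hδ0, hδ2⟩ := hδ
  have hshift : ‖z - 1‖ ≤ ‖z + δ - 1‖ + δ := by
    have := norm_sub_le (z + δ - 1) (δ : ℂ)
    rwa [show z + δ - 1 - δ = z - 1 by ring, Complex.norm_real,
      Real.norm_of_nonneg hδ0.le] at this
  have hnorm : ‖z‖ ≤ ‖z + δ - 1‖ + (1 - δ) := by
    have := norm_add_le (z + δ - 1) ((1 - δ : ℝ) : ℂ)
    rwa [Complex.norm_real, Real.norm_of_nonneg (by linarith), Complex.ofReal_sub,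
      Complex.ofReal_one, show z + δ - 1 + (1 - δ) = z by ring] at this
  by_contra! hz
  have hz34 : (3 : ℝ) / 4 ≤ ‖z‖ := by linarith
  nlinarith [mul_le_mul_of_nonneg_right (mul_self_le_mul_self (by norm_num) hz34)
    (norm_nonneg (z + δ - 1))]

theorem Matrix.exists_mem_spectrum_eq_mul_of_mem_spectrum_smul {n : Type*} [Fintype n]
    [DecidableEq n] [Nonempty n] {A : Matrix n n ℂ} {c z : ℂ} (hz : z ∈ spectrum ℂ (c • A)) :
    ∃ μ ∈ spectrum ℂ A, z = c * μ := by
  rw [spectrum.smul_eq_smul c A (spectrum.nonempty_of_isAlgClosed_of_finiteDimensional ℂ A)]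
    at hz
  obtain ⟨μ, hμ, rfl⟩ := hz
  exact ⟨μ, hμ, rfl⟩

/-- Preconditioned-methods lemma (Section 3.1.3): if the spectral radius of `PH` is at most
`1/8` and `δ ∈ (0, 1/2]`, then any nonzero `λ ∈ ℂ` such that `λ + δ − 1` is an eigenvalue of
`−((λ−1)/λ²)PH` satisfies `|λ| < 1 − δ/2`. -/
theorem stmt9 (d : ℕ) (hd : 1 ≤ d) (H P : Matrix (Fin d) (Fin d) ℝ)
    (hPH : ∀ μ ∈ spectrum ℂ ((P * H).map (Complex.ofReal ·)), ‖μ‖ ≤ 1 / 8)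
    (δ : ℝ) (hδ : δ ∈ Set.Ioc (0 : ℝ) (1 / 2))
    (lam : ℂ) (hlam0 : lam ≠ 0)
    (hlam : lam + (δ : ℂ) - 1 ∈ spectrum ℂ
      ((-((lam - 1) / lam ^ 2)) • (P * H).map (Complex.ofReal ·))) :
    ‖lam‖ < 1 - δ / 2 := by
  have : NeZero d := ⟨by omega⟩
  obtain ⟨μ, hμ, hlam_eq⟩ := Matrix.exists_mem_spectrum_eq_mul_of_mem_spectrum_smul hlam
  refine Complex.norm_lt_one_sub_half_of_sq_mul_norm_le hδ ?_
  have hlam_pos : 0 < ‖lam‖ := norm_pos_iff.mpr hlam0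
  calc ‖lam‖ ^ 2 * ‖lam + δ - 1‖ = ‖lam - 1‖ * ‖μ‖ := by
        rw [hlam_eq, norm_mul, norm_neg, norm_div, norm_pow]
        field_simp
    _ ≤ ‖lam - 1‖ / 8 := by
        rw [div_eq_mul_one_div]
        exact mul_le_mul_of_nonneg_left (hPH μ hμ) (norm_nonneg _)
end
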